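/- Let R be a *-ring and p, q projectors with p - q Moore-Penrose invertible. Then p - pqp is Moore-Penrose invertible with (p-pqp)† = p((p-q)†)²; moreover if p - pq is *-cancellable then p - pq is Moore-Penrose invertible with (p-pq)† = (p-q)†p, and p - qp is Moore-Penrose invertible with (p-qp)† = p(p-q)†. -/

import Mathlib

/-!
With `a = p - q` self-adjoint, its Moore-Penrose inverse `d` is self-adjoint and commutes with `a`.
The key observation is that `p` commutes with `a²`, as `p a² = a² p = p - pqp`. Since `d²` is the
Moore-Penrose inverse of the self-adjoint `a²`, Drazin's commutation theorem makes `p` commute with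
`d²`, hence with the projection `a d = a² d²`. From these commutations one checks directly that
`p d²` inverts `p a² = p - pqp` and that `d p` inverts `p a = p - pq`; adjoining gives the inverse
`p d` of `a p = p - qp`.
-/

/-- `b` is a Moore-Penrose inverse of `a`. -/
def IsMP {R : Type*} [Ring R] [StarRing R] (a b : R) : Prop :=
  a * b * a = a ∧ b * a * b = b ∧ star (a * b) = a * b ∧ star (b * a) = b * a

/-- `p` is a projector: `p² = p = p*`. -/
def IsProjector {R : Type*} [Ring R] [StarRing R] (p : R) : Prop :=
  p * p = p ∧ star p = p

/-- `a` is *-cancellable. -/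
def StarCancellable {R : Type*} [Ring R] [StarRing R] (a : R) : Prop :=
  (∀ x : R, star a * a * x = 0 → a * x = 0) ∧ (∀ x : R, x * (a * star a) = 0 → x * a = 0)

namespace IsMP

variable {R : Type*} [Ring R] [StarRing R] {a b c d x : R}

protected theorem star (h : IsMP a b) : IsMP (star a) (star b) := by
  obtain ⟨h₁, h₂, h₃, h₄⟩ := h
  refine ⟨?_, ?_, ?_, ?_⟩
  · rw [← star_mul, ← star_mul, ← mul_assoc, h₁]
  · rw [← star_mul, ← star_mul, ← mul_assoc, h₂]
  · rw [← star_mul, star_star, h₄]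
  · rw [← star_mul, star_star, h₃]

theorem unique (hb : IsMP a b) (hc : IsMP a c) : b = c := by
  obtain ⟨b₁, b₂, b₃, b₄⟩ := hb
  obtain ⟨c₁, c₂, c₃, c₄⟩ := hc
  have hab : a * b = a * c := by
    calc a * b = star (a * c) * star (a * b) := by rw [c₃, b₃, ← mul_assoc, c₁]
      _ = a * c := by rw [← star_mul, ← mul_assoc, b₁, c₃]
  have hba : b * a = c * a := by
    calc b * a = star (b * a) * star (c * a) := by
          rw [b₄, c₄]; simp only [mul_assoc]; rw [← mul_assoc a c a, c₁]
      _ = c * a := by rw [← star_mul, mul_assoc, ← mul_assoc a, b₁, c₄]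
  calc b = c * a * c := by rw [← b₂, hba, mul_assoc, hab, ← mul_assoc]
    _ = c := c₂

theorem isSelfAdjoint (ha : IsSelfAdjoint a) (hd : IsMP a d) : IsSelfAdjoint d :=
  (ha.star_eq ▸ hd.star).unique hd

theorem commute (ha : IsSelfAdjoint a) (hd : IsMP a d) : Commute a d := by
  have h := hd.2.2.1
  rw [star_mul, (hd.isSelfAdjoint ha).star_eq, ha.star_eq] at h
  exact h.symm

theorem mul_self_mul_mul_self (ha : IsSelfAdjoint a) (hd : IsMP a d) :
    a * a * (d * d) = a * d := by
  rw [(hd.commute ha).mul_mul_mul_comm, ← mul_assoc, hd.1]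

theorem mul_self (ha : IsSelfAdjoint a) (hd : IsMP a d) : IsMP (a * a) (d * d) := by
  have hda : d * d * (a * a) = a * d := by
    rw [(hd.commute ha).eq, (hd.commute ha).symm.mul_mul_mul_comm, ← mul_assoc, hd.2.1]
  refine ⟨?_, ?_, ?_, ?_⟩
  · rw [mul_self_mul_mul_self ha hd, ← mul_assoc, hd.1]
  · rw [hda, (hd.commute ha).eq, ← mul_assoc, hd.2.1]
  · rw [mul_self_mul_mul_self ha hd, hd.2.2.1]
  · rw [hda, (hd.commute ha).eq, hd.2.2.2]

theorem commute_of_commute_of_commute_star (hc : IsMP b c) (hb : Commute x b)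
    (hb' : Commute x (star b)) : Commute x c := by
  obtain ⟨h₁, h₂, h₃, h₄⟩ := hc
  -- `c = c c⋆ b⋆ = b⋆ c⋆ c`, which gives `c x = c x b c = c b x c = x c`.
  have hl : c = c * star c * star b := by rw [mul_assoc, ← star_mul, h₃, ← mul_assoc, h₂]
  have hr : c = star b * star c * c := by rw [← star_mul, h₄, h₂]
  have hbl : star b * (b * c) = star b := by rw [← h₃, ← star_mul, h₁]
  have hbr : c * b * star b = star b := by rw [← h₄, ← star_mul, ← mul_assoc, h₁]
  have hcx : c * x = c * x * (b * c) := by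
    have e : c * x = c * star c * (x * star b) := by rw [hb'.eq, ← mul_assoc, ← hl]
    calc c * x = c * star c * (x * (star b * (b * c))) := by rw [hbl, e]
      _ = c * x * (b * c) := by rw [e]; simp only [mul_assoc]
  have hxc : x * c = c * b * (x * c) := by
    have e : x * c = star b * x * (star c * c) := by
      rw [← hb'.eq, mul_assoc, ← mul_assoc (star b), ← hr]
    calc x * c = c * b * star b * x * (star c * c) := by rw [hbr, e]
      _ = c * b * (x * c) := by rw [e]; simp only [mul_assoc]
  calc x * c = c * b * (x * c) := hxc
    _ = c * x * (b * c) := by simp only [mul_assoc]; rw [← mul_assoc b x, ← hb.eq, mul_assoc]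
    _ = c * x := hcx.symm

theorem commute_mul_self (ha : IsSelfAdjoint a) (hd : IsMP a d) (hxa : Commute x (a * a)) :
    Commute x (d * d) :=
  (hd.mul_self ha).commute_of_commute_of_commute_star hxa (by rwa [star_mul, ha.star_eq])

theorem mul_projector {p : R} (hc : IsMP b c) (hp : IsProjector p) (hpb : Commute p b)
    (hpc : Commute p c) : IsMP (p * b) (p * c) := by
  obtain ⟨h₁, h₂, h₃, h₄⟩ := hc
  have hpp : ∀ y, p * (p * y) = p * y := fun y => by rw [← mul_assoc, hp.1]
  refine ⟨?_, ?_, ?_, ?_⟩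
  · simp only [mul_assoc, ← hpb.left_comm, ← hpc.left_comm, hpp]
    rw [← mul_assoc b, h₁]
  · simp only [mul_assoc, ← hpb.left_comm, ← hpc.left_comm, hpp]
    rw [← mul_assoc c, h₂]
  · rw [show p * b * (p * c) = p * (b * c) by simp only [mul_assoc, ← hpb.left_comm, hpp],
      star_mul, h₃, hp.2, ← (hpb.mul_right hpc).eq]
  · rw [show p * c * (p * b) = p * (c * b) by simp only [mul_assoc, ← hpc.left_comm, hpp],
      star_mul, h₄, hp.2, ← (hpc.mul_right hpb).eq]

theorem projector_mul {p : R} (ha : IsSelfAdjoint a) (hd : IsMP a d) (hp : IsProjector p)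
    (hpa : Commute p (a * a)) : IsMP (p * a) (d * p) := by
  have hpe : Commute p (a * d) :=
    mul_self_mul_mul_self ha hd ▸ hpa.mul_right (hd.commute_mul_self ha hpa)
  have hpe' : ∀ y, p * (a * (d * y)) = a * (d * (p * y)) := fun y => by
    simp only [← mul_assoc, hpe.eq]
  have hpp : ∀ y, p * (p * y) = p * y := fun y => by rw [← mul_assoc, hp.1]
  have hada : a * (d * a) = a := by rw [← mul_assoc, hd.1]
  have hdad : ∀ y, d * (a * (d * y)) = d * y := fun y => by
    simp only [← mul_assoc, hd.2.1]
  have hdpa : d * p * a = a * p * d := by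
    have hA : a * a * d = a := by rw [mul_assoc, (hd.commute ha).eq, ← mul_assoc, hd.1]
    have hA' : d * a * a = a := by rw [← (hd.commute ha).eq, hd.1]
    calc d * p * a = d * (p * (a * a)) * d := by
          conv_lhs => rw [← hA]
          simp only [mul_assoc]
      _ = d * a * a * p * d := by rw [hpa.eq]; simp only [mul_assoc]
      _ = a * p * d := by rw [hA']
  refine ⟨?_, ?_, ?_, ?_⟩
  · simp only [mul_assoc, hpp, ← hpe', hada]
  · simp only [mul_assoc, hpp, hpe', hdad, hp.1]
  · rw [show p * a * (d * p) = a * d * p by simp only [mul_assoc, hpe', hp.1], ← hpe.eq,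
      star_mul, hp.2, hd.2.2.1, hpe.eq]
  · rw [show d * p * (p * a) = d * p * a by simp only [mul_assoc, hpp], star_mul, star_mul, hp.2,
      ha.star_eq, (hd.isSelfAdjoint ha).star_eq, ← mul_assoc, hdpa]

end IsMP

namespace IsProjector

variable {R : Type*} [Ring R] [StarRing R] {p q : R}

theorem mul_sub_mul_self (hp : IsProjector p) (hq : IsProjector q) :
    p * ((p - q) * (p - q)) = p - p * q * p := by
  simp only [mul_sub, sub_mul, ← mul_assoc, hp.1, hq.1]
  abel

theorem sub_mul_self_mul (hp : IsProjector p) (hq : IsProjector q) :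
    (p - q) * (p - q) * p = p - p * q * p := by
  simp only [mul_sub, sub_mul, hp.1, hq.1, mul_assoc _ p p]
  abel

theorem isSelfAdjoint_sub (hp : IsProjector p) (hq : IsProjector q) : IsSelfAdjoint (p - q) := by
  rw [IsSelfAdjoint, star_sub, hp.2, hq.2]

end IsProjector

theorem stmt18 {R : Type*} [Ring R] [StarRing R] (p q d : R)
    (hp : IsProjector p) (hq : IsProjector q)
    (hd : IsMP (p - q) d) :
    IsMP (p - p * q * p) (p * (d * d)) ∧
    (StarCancellable (p - p * q) →
      IsMP (p - p * q) (d * p) ∧ IsMP (p - q * p) (p * d)) := by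
  have ha := hp.isSelfAdjoint_sub hq
  have hpa : Commute p ((p - q) * (p - q)) :=
    (hp.mul_sub_mul_self hq).trans (hp.sub_mul_self_mul hq).symm
  have hpl : IsMP (p * (p - q)) (d * p) := hd.projector_mul ha hp hpa
  have hpl' : p * (p - q) = p - p * q := by rw [mul_sub, hp.1]
  refine ⟨?_, fun _ => ⟨hpl' ▸ hpl, ?_⟩⟩
  · rw [← hp.mul_sub_mul_self hq]
    exact (hd.mul_self ha).mul_projector hp hpa (hd.commute_mul_self ha hpa)
  · have h := hpl.star
    rwa [star_mul, star_mul, hp.2, ha.star_eq, (hd.isSelfAdjoint ha).star_eq, sub_mul, hp.1] at h
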